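/- For all integers n ≥ 1, 1 ≤ a ≤ n with a ≥ 2, and for all t ∈ (0,1), one has |f_{n,a,a−1}(t)| ≥ 2 · |f_{n,a,a−2}(t)|. -/

import Mathlib

open Real

/-- `I n a = ∫₀^a ∏_{k ∈ {0,…,n}, k ≠ a} (k² − x²) dx`. -/
noncomputable def I (n a : ℕ) : ℝ :=
  ∫ x in (0:ℝ)..(a:ℝ), ∏ k ∈ (Finset.range (n+1)).erase a, ((k:ℝ)^2 - x^2)

/-- `C n = (4π)^{-(n+1/2)} / Γ(n+1/2)`. -/
noncomputable def C (n : ℕ) : ℝ :=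
  (4*π) ^ (-((n:ℝ) + 1/2)) / Real.Gamma ((n:ℝ) + 1/2)

/-- `α n = 4π C n Σ_{j=0}^{n-1} (2n choose j) |I(n, n-j)|`. -/
noncomputable def α (n : ℕ) : ℝ :=
  4*π * C n * ∑ j ∈ Finset.range n, ((2*n).choose j : ℝ) * |I n (n - j)|

/-- `f n a r t = (t+r)/((a+t+r)(a−t−r)) · ∏_{k=−n+r}^{n+r} (t+k)`. -/
noncomputable def f (n a r : ℕ) (t : ℝ) : ℝ :=
  ((t + r) / (((a:ℝ) + t + r) * ((a:ℝ) - t - r))) *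
    ∏ k ∈ Finset.range (2*n+1), (t + ((k:ℝ) - n + r))


lemma hc_aux (a T : ℝ) (ha : 0 ≤ a) (h0 : 0 ≤ T) (h1 : T ≤ 1) :
    0 ≤ 4 - 2*T + 3*T^2 + T^3 + 2*a + 2*a*T + 3*a*T^2 + 2*a^2*T := by
  nlinarith [sq_nonneg T, pow_nonneg h0 3, mul_nonneg ha h0, mul_nonneg (mul_nonneg ha ha) h0,
    mul_nonneg ha (sq_nonneg T)]

lemma hd_aux (a T : ℝ) (ha : 0 ≤ a) (h0 : 0 ≤ T) (h1 : T ≤ 1) :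
    0 ≤ 12 + 4*T + 15*T^2 - 4*T^3 - 3*T^4 + 20*a + 28*a*T + 3*a*T^2 - 11*a*T^3
      + 20*a^2 + 14*a^2*T - 12*a^2*T^2 + 8*a^3 - 4*a^3*T := by
  nlinarith [mul_nonneg (mul_nonneg h0 h0) (sub_nonneg.2 h1),
    mul_nonneg (mul_nonneg (mul_nonneg h0 h0) h0) (sub_nonneg.2 h1),
    mul_nonneg (mul_nonneg ha (mul_nonneg h0 h0)) (sub_nonneg.2 h1),
    mul_nonneg (mul_nonneg ha h0) (sub_nonneg.2 h1),
    mul_nonneg (mul_nonneg (mul_nonneg ha ha) h0) (sub_nonneg.2 h1),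
    mul_nonneg (mul_nonneg (mul_nonneg ha ha) ha) (sub_nonneg.2 h1),
    mul_nonneg ha h0, mul_nonneg (mul_nonneg ha ha) h0]

lemma key_ineq (A N T : ℝ) (hA : 2 ≤ A) (hN : A ≤ N) (h0 : 0 < T) (h1 : T < 1) :
    2*(T+A-2)*(2*A+T-1)*(1-T)*(N+2-A-T) ≤ (T+A-1)*(2*A+T-2)*(2-T)*(N+A-1+T) := by
  have ha : 0 ≤ A - 2 := by linarith
  have hm : 0 ≤ N - A := by linarith
  have hc := hc_aux (A-2) T ha h0.le h1.le
  have hd := hd_aux (A-2) T ha h0.le h1.le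
  have e : (T+A-1)*(2*A+T-2)*(2-T)*(N+A-1+T) - 2*(T+A-2)*(2*A+T-1)*(1-T)*(N+2-A-T)
      = (4 - 2*T + 3*T^2 + T^3 + 2*(A-2) + 2*(A-2)*T + 3*(A-2)*T^2 + 2*(A-2)^2*T) * (N-A)
        + (12 + 4*T + 15*T^2 - 4*T^3 - 3*T^4 + 20*(A-2) + 28*(A-2)*T + 3*(A-2)*T^2
          - 11*(A-2)*T^3 + 20*(A-2)^2 + 14*(A-2)^2*T - 12*(A-2)^2*T^2 + 8*(A-2)^3
          - 4*(A-2)^3*T) := by ring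
  nlinarith [mul_nonneg hc hm]

lemma prod_shift (n : ℕ) (t c : ℝ) :
    (t + c - 1) * ∏ k ∈ Finset.range (2*n+1), (t + ((k:ℝ) + c)) =
    (t + 2*(n:ℝ) + c) * ∏ k ∈ Finset.range (2*n+1), (t + ((k:ℝ) + c - 1)) := by
  have h1 := Finset.prod_range_succ' (fun k => t + ((k:ℝ) + c - 1)) (2*n+1)
  have h2 := Finset.prod_range_succ (fun k => t + ((k:ℝ) + c - 1)) (2*n+1)
  have h3 : ∏ k ∈ Finset.range (2*n+1), (t + (((k+1:ℕ):ℝ) + c - 1))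
      = ∏ k ∈ Finset.range (2*n+1), (t + ((k:ℝ) + c)) := by
    apply Finset.prod_congr rfl; intro k _; push_cast; ring
  simp only [h3] at h1
  have h4 := h1.symm.trans h2
  push_cast at h4
  linarith [h4]

theorem abs_f_last_ratio (n a : ℕ) (hn : 1 ≤ n) (ha2 : 2 ≤ a) (han : a ≤ n)
    (t : ℝ) (ht : t ∈ Set.Ioo (0:ℝ) 1) :
    |f n a (a-1) t| ≥ 2 * |f n a (a-2) t| := by
  obtain ⟨ht0, ht1⟩ := ht
  set A := (a:ℝ) with hAdef
  set N := (n:ℝ) with hNdef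
  have hA2 : (2:ℝ) ≤ A := by rw [hAdef]; exact_mod_cast ha2
  have hAN : A ≤ N := by rw [hAdef, hNdef]; exact_mod_cast han
  have hr1 : ((a-1:ℕ):ℝ) = A - 1 := by
    rw [Nat.cast_sub (by omega)]; norm_num [hAdef]
  have hr2 : ((a-2:ℕ):ℝ) = A - 2 := by
    rw [Nat.cast_sub (by omega)]; norm_num [hAdef]
  unfold f
  rw [hr1, hr2]
  set P1 := ∏ k ∈ Finset.range (2*n+1), (t + ((k:ℝ) - N + (A - 1))) with hP1
  set P2 := ∏ k ∈ Finset.range (2*n+1), (t + ((k:ℝ) - N + (A - 2))) with hP2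
  -- product identity
  have hshift := prod_shift n t (A - N - 1)
  have eP1 : ∏ k ∈ Finset.range (2*n+1), (t + ((k:ℝ) + (A - N - 1))) = P1 := by
    apply Finset.prod_congr rfl; intro k _; ring_nf
  have eP2 : ∏ k ∈ Finset.range (2*n+1), (t + ((k:ℝ) + (A - N - 1) - 1)) = P2 := by
    apply Finset.prod_congr rfl; intro k _; ring_nf
  rw [eP1, eP2] at hshift
  -- hshift : (t + (A-N-1) - 1) * P1 = (t + 2N + (A-N-1)) * P2
  have habs : (N + 2 - A - t) * |P1| = (N + A - 1 + t) * |P2| := by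
    have h := congrArg abs hshift
    rw [abs_mul, abs_mul] at h
    rw [abs_of_neg (by linarith : t + (A - N - 1) - 1 < 0),
      abs_of_pos (by linarith : (0:ℝ) < t + 2*N + (A - N - 1))] at h
    calc (N + 2 - A - t) * |P1| = -(t + (A - N - 1) - 1) * |P1| := by ring
    _ = (t + 2*N + (A - N - 1)) * |P2| := h
    _ = (N + A - 1 + t) * |P2| := by ring
  -- positivity facts
  have hp1 : (0:ℝ) < t + (A - 1) := by linarith
  have hq1 : (0:ℝ) < A + t + (A - 1) := by linarith
  have hs1 : (0:ℝ) < A - t - (A - 1) := by linarith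
  have hp2 : (0:ℝ) < t + (A - 2) := by linarith
  have hq2 : (0:ℝ) < A + t + (A - 2) := by linarith
  have hs2 : (0:ℝ) < A - t - (A - 2) := by linarith
  rw [ge_iff_le, abs_mul, abs_mul, abs_div, abs_div, abs_mul, abs_mul,
    abs_of_pos hp1, abs_of_pos hp2, abs_of_pos hq1, abs_of_pos hq2,
    abs_of_pos hs1, abs_of_pos hs2]
  have hden1 : (0:ℝ) < (A + t + (A - 1)) * (A - t - (A - 1)) := mul_pos hq1 hs1
  have hden2 : (0:ℝ) < (A + t + (A - 2)) * (A - t - (A - 2)) := mul_pos hq2 hs2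
  rw [show 2 * ((t + (A - 2)) / ((A + t + (A - 2)) * (A - t - (A - 2))) * |P2|)
      = (2 * (t + (A - 2)) * |P2|) / ((A + t + (A - 2)) * (A - t - (A - 2))) from by ring,
    show (t + (A - 1)) / ((A + t + (A - 1)) * (A - t - (A - 1))) * |P1|
      = ((t + (A - 1)) * |P1|) / ((A + t + (A - 1)) * (A - t - (A - 1))) from by ring,
    div_le_div_iff₀ hden2 hden1]
  -- goal : 2*(t+(A-2))*|P2| * ((A+t+(A-1))*(A-t-(A-1))) ≤ (t+(A-1))*|P1| * ((A+t+(A-2))*(A-t-(A-2)))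
  have hNpos : (0:ℝ) < N + A - 1 + t := by linarith
  rw [← mul_le_mul_iff_of_pos_right hNpos]
  have hkey := key_ineq A N t hA2 hAN ht0 ht1
  have hfin := mul_le_mul_of_nonneg_right hkey (abs_nonneg P1)
  calc 2 * (t + (A - 2)) * |P2| * ((A + t + (A - 1)) * (A - t - (A - 1))) * (N + A - 1 + t)
      = 2 * (t + (A - 2)) * ((A + t + (A - 1)) * (A - t - (A - 1))) * ((N + A - 1 + t) * |P2|) := by
        ring
    _ = 2 * (t + (A - 2)) * ((A + t + (A - 1)) * (A - t - (A - 1))) * ((N + 2 - A - t) * |P1|) := by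
        rw [← habs]
    _ = 2*(t+A-2)*(2*A+t-1)*(1-t)*(N+2-A-t) * |P1| := by ring
    _ ≤ (t+A-1)*(2*A+t-2)*(2-t)*(N+A-1+t) * |P1| := hfin
    _ = (t + (A - 1)) * |P1| * ((A + t + (A - 2)) * (A - t - (A - 2))) * (N + A - 1 + t) := by ring
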